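/- arXiv:2205.04694 — 3 statements merged into one kernel-verified Lean document; each statement's English description precedes it below -/
import Mathlib

section
/- A dissimilarity space (X,d) admits a circular order β such that every quadruple x ⋖ y ⋖ z ⋖ t satisfies d(x,z) ≥ min{d(y,z), d(t,z)} if and only if there exists a circular order β such that for every x ∈ X and every r ≥ 0, the ball B_r(x) = {y : d(x,y) ≤ r} and its complement {t : d(x,t) > r} are arcs of β (or equal to X or empty). -/
/-- A circular order on `X`: a ternary relation satisfying Huntington's axioms
(CO1)-(CO4), holding only for triples of distinct points. -/
structure CircOrder (X : Type*) where
  btw : X → X → X → Prop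
  distinct : ∀ {u v w}, btw u v w → u ≠ v ∧ v ≠ w ∧ u ≠ w
  total : ∀ {u v w : X}, u ≠ v → v ≠ w → u ≠ w → btw u v w ∨ btw w v u
  asymm : ∀ {u v w}, btw u v w → ¬ btw w v u
  cyclic : ∀ {u v w}, btw u v w → btw v w u
  btw_trans : ∀ {u v w x}, btw u v w → btw u w x → btw u v x

/-- `x₀ ⋖ x₁ ⋖ ... ⋖ x_{n-1}`: the sequence contains at least three distinct
points and `β (x i) (x j) (x k)` holds for all `i < j < k` with distinct values. -/
def CircOrder.Chain {X : Type*} (C : CircOrder X) {n : ℕ} (x : Fin n → X) : Prop :=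
  (∃ i j k : Fin n, x i ≠ x j ∧ x j ≠ x k ∧ x i ≠ x k) ∧
  ∀ i j k : Fin n, i < j → j < k →
    x i ≠ x j → x j ≠ x k → x i ≠ x k → C.btw (x i) (x j) (x k)

/-- The arc from `a` to `b` (in the direction of the circular order). -/
def CircOrder.arc {X : Type*} (C : CircOrder X) (a b : X) : Set X :=
  {t | C.btw a t b} ∪ {a, b}

/-- `A` is an arc of the circular order: a nonempty proper subset with no four
distinct points `u, v ∈ A`, `s, t ∉ A` arranged cyclically as `u ⋖ s ⋖ v ⋖ t`. -/
def CircOrder.IsArc {X : Type*} (C : CircOrder X) (A : Set X) : Prop :=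
  A.Nonempty ∧ A ≠ Set.univ ∧
    ¬ ∃ u v s t : X, u ∈ A ∧ v ∈ A ∧ s ∉ A ∧ t ∉ A ∧ u ≠ v ∧ s ≠ t ∧
      C.Chain ![u, s, v, t]

/-- `d` is a dissimilarity on `X`. -/
def Dissim {X : Type*} (d : X → X → ℝ) : Prop :=
  (∀ x y, d x y = d y x) ∧ (∀ x y, 0 ≤ d x y) ∧ (∀ x y, d x y = 0 ↔ x = y)

/-- The set of farthest neighbors of `x`. -/
def Fset {X : Type*} (d : X → X → ℝ) (x : X) : Set X :=
  {y | ∀ z, d x z ≤ d x y}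

/-- `β` is compatible in the pre-circular Robinson sense: every quadruple
`x ⋖ y ⋖ z ⋖ t` satisfies `cR(x,y,z,t)`. -/
def preCompat {X : Type*} (C : CircOrder X) (d : X → X → ℝ) : Prop :=
  ∀ x y z t : X, C.Chain ![x, y, z, t] →
    min (max (d x y) (d y z)) (max (d x t) (d t z)) ≤ d x z

/-- `β` is compatible in the strictly pre-circular (= strictly circular)
Robinson sense: every quadruple of distinct points `x ⋖ y ⋖ z ⋖ t`
satisfies `scR(x,y,z,t)`. -/
def spreCompat {X : Type*} (C : CircOrder X) (d : X → X → ℝ) : Prop :=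
  ∀ x y z t : X, List.Pairwise (· ≠ ·) [x, y, z, t] → C.Chain ![x, y, z, t] →
    min (max (d x y) (d y z)) (max (d x t) (d t z)) < d x z

/-- `β` is compatible in the quasi-circular Robinson sense: every quadruple
`x ⋖ y ⋖ z ⋖ t` satisfies `qcR(x,y,z,t)`. -/
def qcCompat {X : Type*} (C : CircOrder X) (d : X → X → ℝ) : Prop :=
  ∀ x y z t : X, C.Chain ![x, y, z, t] → min (d y z) (d t z) ≤ d x z

/-- `β` is compatible in the strictly quasi-circular Robinson sense: every
quadruple of distinct points `x ⋖ y ⋖ z ⋖ t` satisfies `sqcR(x,y,z,t)`. -/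
def sqcCompat {X : Type*} (C : CircOrder X) (d : X → X → ℝ) : Prop :=
  ∀ x y z t : X, List.Pairwise (· ≠ ·) [x, y, z, t] → C.Chain ![x, y, z, t] →
    min (d y z) (d t z) < d x z

/-- The arc from `a` to `b`, with the linear order induced by the circular
order, is a Robinson space: any `u, v, w` arranged as `a ⋖ u ⋖ v ⋖ w ⋖ b`
satisfy the Robinson inequality. -/
def RobinsonOnArc {X : Type*} (C : CircOrder X) (d : X → X → ℝ) (a b : X) : Prop :=
  ∀ u v w : X, C.Chain ![a, u, v, w, b] → max (d u v) (d v w) ≤ d u w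

/-- The left arc `L_x = {t ∈ M_x : x ⋖ t ⋖ F_x}`. -/
def Lset {X : Type*} (C : CircOrder X) (d : X → X → ℝ) (x : X) : Set X :=
  {t | t ≠ x ∧ t ∉ Fset d x ∧ ∀ s ∈ Fset d x, C.btw x t s}

/-- The right arc `R_x = {t ∈ M_x : F_x ⋖ t ⋖ x}`. -/
def Rset {X : Type*} (C : CircOrder X) (d : X → X → ℝ) (x : X) : Set X :=
  {t | t ≠ x ∧ t ∉ Fset d x ∧ ∀ s ∈ Fset d x, C.btw s t x}


section Aux
variable {X : Type*} {C : CircOrder X}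

private lemma chain4_of (C : CircOrder X) {a b c e : X}
    (hab : a ≠ b) (h1 : C.btw a b c) (h2 : C.btw a b e) (h3 : C.btw a c e)
    (h4 : C.btw b c e) : C.Chain ![a,b,c,e] := by
  constructor
  · exact ⟨0, 1, 2, by simpa using hab, by simpa using (C.distinct h1).2.1,
      by simpa using (C.distinct h1).2.2⟩
  · intro i j k hij hjk _ _ _
    fin_cases i <;> fin_cases j <;> fin_cases k <;> simp_all

private lemma chain4_elim {a b c e : X}
    (h : C.Chain ![a,b,c,e]) (hab : a≠b) (hac : a≠c) (hae : a≠e)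
    (hbc : b≠c) (hbe : b≠e) (hce : c≠e) :
    C.btw a b c ∧ C.btw a b e ∧ C.btw a c e ∧ C.btw b c e := by
  refine ⟨?_, ?_, ?_, ?_⟩
  · simpa using h.2 0 1 2 (by decide) (by decide) (by simpa) (by simpa) (by simpa)
  · simpa using h.2 0 1 3 (by decide) (by decide) (by simpa) (by simpa) (by simpa)
  · simpa using h.2 0 2 3 (by decide) (by decide) (by simpa) (by simpa) (by simpa)
  · simpa using h.2 1 2 3 (by decide) (by decide) (by simpa) (by simpa) (by simpa)

private lemma cyc2 {a b c : X} (h : C.btw a b c) : C.btw c a b := C.cyclic (C.cyclic h)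

/-- from `a ⋖ b ⋖ e` and `b ⋖ x ⋖ e` insert `x`: `a ⋖ b ⋖ x` and `a ⋖ x ⋖ e`. -/
private lemma insert_btw {a b e x : X} (h1 : C.btw a b e) (h2 : C.btw b x e) :
    C.btw a b x ∧ C.btw a x e := by
  constructor
  · exact cyc2 (C.btw_trans h2 (C.cyclic h1))
  · exact C.cyclic (C.btw_trans (cyc2 h1) (cyc2 h2))

/-- Under qcCompat, no alternating quadruple around a ball. -/
private lemma noAlt {d : X → X → ℝ} (hd : Dissim d) (hq : qcCompat C d)
    (x : X) (r : ℝ) (hr : 0 ≤ r) {a b c e : X}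
    (hch : C.Chain ![a,b,c,e]) (hab : a≠b) (hac : a≠c) (hae : a≠e)
    (hbc : b≠c) (hbe : b≠e) (hce : c≠e)
    (ha : d x a ≤ r) (hc : d x c ≤ r) (hb : r < d x b) (he : r < d x e) : False := by
  obtain ⟨hsymm, hnn, hzero⟩ := hd
  obtain ⟨H1, H2, H3, H4⟩ := chain4_elim hch hab hac hae hbc hbe hce
  have hxb : x ≠ b := fun h => absurd ((hzero x b).2 (by rw [h])) (by intro h0; rw [h0] at hb; linarith)
  have hxe : x ≠ e := fun h => absurd ((hzero x e).2 (by rw [h])) (by intro h0; rw [h0] at he; linarith)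
  by_cases hxa : x = a
  · subst hxa
    have hch' : C.Chain ![c,e,x,b] :=
      chain4_of C hce (C.cyclic H3) (C.cyclic H4) (cyc2 H1) (cyc2 H2)
    have := hq c e x b hch'
    rw [hsymm e x, hsymm b x, hsymm c x] at this
    have := min_le_iff.mp this
    rcases this with h | h <;> linarith
  by_cases hxc : x = c
  · subst hxc
    have := hq a b x e hch
    rw [hsymm b x, hsymm e x, hsymm a x] at this
    have := min_le_iff.mp this
    rcases this with h | h <;> linarith
  · rcases C.total hxb.symm hxe hbe with hbxe | hexb
    · obtain ⟨hA, hB⟩ := insert_btw H2 hbxe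
      have hch' : C.Chain ![a,b,x,e] := chain4_of C hab hA H2 hB hbxe
      have := hq a b x e hch'
      rw [hsymm b x, hsymm e x, hsymm a x] at this
      have := min_le_iff.mp this
      rcases this with h | h <;> linarith
    · obtain ⟨hA, hB⟩ := insert_btw (C.cyclic H4) hexb
      have hch' : C.Chain ![c,e,x,b] := chain4_of C hce hA (C.cyclic H4) hB hexb
      have := hq c e x b hch'
      rw [hsymm e x, hsymm b x, hsymm c x] at this
      have := min_le_iff.mp this
      rcases this with h | h <;> linarith

end Aux

theorem stmt9 {X : Type*} [Fintype X] (d : X → X → ℝ) (hd : Dissim d) :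
    (∃ C : CircOrder X, qcCompat C d) ↔
    (∃ C : CircOrder X, ∀ (x : X) (r : ℝ), 0 ≤ r →
      (C.IsArc {y : X | d x y ≤ r} ∨ {y : X | d x y ≤ r} = Set.univ ∨
        {y : X | d x y ≤ r} = ∅) ∧
      (C.IsArc {t : X | r < d x t} ∨ {t : X | r < d x t} = Set.univ ∨
        {t : X | r < d x t} = ∅)) := by
  obtain ⟨hsymm, hnn, hzero⟩ := hd
  constructor
  · rintro ⟨C, hq⟩
    refine ⟨C, fun x r hr => ?_⟩
    set B : Set X := {y : X | d x y ≤ r} with hB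
    have hxB : x ∈ B := by simp [hB, (hzero x x).2 rfl, hr]
    have hcompl : {t : X | r < d x t} = Bᶜ := by
      ext t; simp [hB, not_le]
    by_cases hU : B = Set.univ
    · refine ⟨Or.inr (Or.inl hU), Or.inr (Or.inr ?_)⟩
      rw [hcompl, hU, Set.compl_univ]
    · have hIsB : C.IsArc B := by
        refine ⟨⟨x, hxB⟩, hU, ?_⟩
        rintro ⟨u, v, s, t, hu, hv, hs, ht, huv, hst, hch⟩
        simp only [hB, Set.mem_setOf_eq] at hu hv hs ht
        push_neg at hs ht
        have hus : u ≠ s := fun h => by rw [h] at hu; linarith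
        have hut : u ≠ t := fun h => by rw [h] at hu; linarith
        have hsv : s ≠ v := fun h => by rw [← h] at hv; linarith
        have hvt : v ≠ t := fun h => by rw [h] at hv; linarith
        exact noAlt ⟨hsymm, hnn, hzero⟩ hq x r hr hch hus huv hut hsv hst hvt hu hv hs ht
      have hIsC : C.IsArc Bᶜ := by
        have hne : Bᶜ.Nonempty := by
          rcases Set.ne_univ_iff_exists_notMem B |>.mp hU with ⟨w, hw⟩
          exact ⟨w, hw⟩
        refine ⟨hne, ?_, ?_⟩
        · intro h
          have : x ∈ Bᶜ := h ▸ Set.mem_univ x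
          exact this hxB
        rintro ⟨u, v, s, t, hu, hv, hs, ht, huv, hst, hch⟩
        simp only [hB, Set.mem_compl_iff, Set.mem_setOf_eq, not_le, not_lt] at hu hv hs ht
        have hus : u ≠ s := fun h => by rw [h] at hu; linarith
        have hut : u ≠ t := fun h => by rw [h] at hu; linarith
        have hsv : s ≠ v := fun h => by rw [← h] at hv; linarith
        have hvt : v ≠ t := fun h => by rw [h] at hv; linarith
        obtain ⟨H1, H2, H3, H4⟩ := chain4_elim hch hus huv hut hsv hst hvt
        have hch' : C.Chain ![s,v,t,u] :=
          chain4_of C hsv H4 (C.cyclic H1) (C.cyclic H2) (C.cyclic H3)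
        exact noAlt ⟨hsymm, hnn, hzero⟩ hq x r hr hch' hsv hst hus.symm hvt huv.symm hut.symm
          hs ht hv hu
      exact ⟨Or.inl hIsB, Or.inl (hcompl ▸ hIsC)⟩
  · rintro ⟨C, harc⟩
    refine ⟨C, fun x y z t hch => ?_⟩
    by_contra hcon
    push_neg at hcon
    rw [lt_min_iff] at hcon
    obtain ⟨hyz, htz⟩ := hcon
    have hzr : 0 ≤ d x z := hnn x z
    -- degenerate equalities lead to contradictions with the strict inequalities
    have hyznz : y ≠ z := fun h => by rw [h, (hzero z z).2 rfl] at hyz; linarith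
    have htznz : t ≠ z := fun h => by rw [h, (hzero z z).2 rfl] at htz; linarith
    have hxy : x ≠ y := fun h => by rw [← h] at hyz; linarith
    have hxt : x ≠ t := fun h => by rw [← h] at htz; linarith
    by_cases hxz : x = z
    · -- x = z : chain forces a contradiction via asymmetry
      subst hxz
      by_cases hyt : y = t
      · subst hyt
        obtain ⟨⟨i, j, k, hij, hjk, hik⟩, -⟩ := hch
        fin_cases i <;> fin_cases j <;> fin_cases k <;> simp_all
      · have b1 : C.btw x y t := by
          simpa using hch.2 0 1 3 (by decide) (by decide) (by simpa using hxy)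
            (by simpa using hyt) (by simpa using hxt)
        have b2 : C.btw y x t := by
          simpa using hch.2 1 2 3 (by decide) (by decide) (by simpa using hyznz)
            (by simpa using htznz.symm) (by simpa using hyt)
        exact C.asymm b2 (cyc2 b1)
    · by_cases hyt : y = t
      · subst hyt
        have b1 : C.btw x y z := by
          simpa using hch.2 0 1 2 (by decide) (by decide) (by simpa using hxy)
            (by simpa using hyznz) (by simpa using hxz)
        have b2 : C.btw x z y := by
          simpa using hch.2 0 2 3 (by decide) (by decide) (by simpa using hxz)
            (by simpa using hyznz.symm) (by simpa using hxy)
        exact C.asymm b2 (C.cyclic b1)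
      · -- all six pairs distinct: use the ball around z of radius d x z
        set r := d x z with hr
        obtain ⟨hBall, -⟩ := harc z r hzr
        have hxmem : d z x ≤ r := by rw [hsymm z x]
        have hzmem : d z z ≤ r := by rw [(hzero z z).2 rfl]; exact hzr
        have hymem : ¬ d z y ≤ r := by rw [hsymm z y]; linarith
        have htmem : ¬ d z t ≤ r := by rw [hsymm z t]; linarith
        have hIs : C.IsArc {w : X | d z w ≤ r} := by
          rcases hBall with h | h | h
          · exact h
          · refine absurd ?_ hymem
            have : y ∈ ({w : X | d z w ≤ r} : Set X) := by rw [h]; trivial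
            exact this
          · have : z ∈ ({w : X | d z w ≤ r} : Set X) := hzmem
            rw [h] at this
            exact this.elim
        exact hIs.2.2 ⟨x, z, y, t, hxmem, hzmem, hymem, htmem, hxz, hyt, hch⟩
end

section
/- Let (X,d) be a quasi-circular Robinson space with compatible circular order β, x ∈ X with eccentricity r_x and farthest-neighbor set F_x, and L_x = {t ∈ X ∖ (F_x ∪ {x}) : x ⋖ t ⋖ F_x}. If y, z ∈ L_x and x ⋖ y ⋖ z, then d(x,y) ≤ d(x,z). Moreover, if (X,d) is strictly quasi-circular Robinson, then d(x,y) < d(x,z). -/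
lemma mkChain4 {X : Type*} (C : CircOrder X) {a b c e : X}
    (h1 : C.btw a b c) (h2 : C.btw a b e) (h3 : C.btw a c e) (h4 : C.btw b c e) :
    C.Chain ![a, b, c, e] := by
  obtain ⟨hab, hbc, hac⟩ := C.distinct h1
  refine ⟨⟨0, 1, 2, by simpa using hab, by simpa using hbc, by simpa using hac⟩, ?_⟩
  intro i j k hij hjk _ _ _
  fin_cases i <;> fin_cases j <;> fin_cases k <;>
    simp_all

theorem stmt10 {X : Type*} [Fintype X] (d : X → X → ℝ) (hd : Dissim d)
    (C : CircOrder X) (hc : qcCompat C d) (x y z : X)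
    (hy : y ∈ Lset C d x) (hz : z ∈ Lset C d x) (hbtw : C.btw x y z) :
    d x y ≤ d x z ∧ (sqcCompat C d → d x y < d x z) := by
  -- pick a farthest point f
  obtain ⟨f, -, hf⟩ := Finset.exists_max_image (Finset.univ : Finset X) (d x)
    ⟨x, Finset.mem_univ x⟩
  have hfF : f ∈ Fset d x := fun w => hf w (Finset.mem_univ w)
  have hylt : d x y < d x f := by
    have := hy.2.1
    simp only [Fset, Set.mem_setOf_eq, not_forall, not_le] at this
    obtain ⟨w, hw⟩ := this
    exact lt_of_lt_of_le hw (hfF w)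
  have hzlt : d x z < d x f := by
    have := hz.2.1
    simp only [Fset, Set.mem_setOf_eq, not_forall, not_le] at this
    obtain ⟨w, hw⟩ := this
    exact lt_of_lt_of_le hw (hfF w)
  have hxzf : C.btw x z f := hz.2.2 f hfF
  have hxyf : C.btw x y f := hy.2.2 f hfF
  have hzfx : C.btw z f x := C.cyclic hxzf
  have hzxy : C.btw z x y := C.cyclic (C.cyclic hbtw)
  have hzfy : C.btw z f y := C.btw_trans hzfx hzxy
  have hfxy : C.btw f x y := C.cyclic (C.cyclic hxyf)
  have hch : C.Chain ![z, f, x, y] := mkChain4 C hzfx hzfy hzxy hfxy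
  have hq : min (d f x) (d y x) ≤ d z x := hc z f x y hch
  have hyx : d y x ≤ d f x := by
    rw [hd.1 y x, hd.1 f x]; exact hylt.le
  constructor
  · have := (min_eq_right hyx) ▸ hq
    rw [hd.1 x y, hd.1 x z]; exact this
  · intro hs
    obtain ⟨hzx, hxy, hzy⟩ := C.distinct hzxy
    have hzf : z ≠ f := fun h => by rw [h] at hzlt; exact lt_irrefl _ hzlt
    have hfx : f ≠ x := (C.distinct hzfx).2.1
    have hfy : f ≠ y := fun h => by rw [h] at hylt; exact lt_irrefl _ hylt
    have hq' : min (d f x) (d y x) < d z x := by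
      refine hs z f x y ?_ hch
      simp [hzf, hzx, hzy, hfx, hfy, hxy]
    have := (min_eq_right hyx) ▸ hq'
    rw [hd.1 x y, hd.1 x z]; exact this
end

section
/- Let (X,d) be a strict quasi-circular Robinson space with compatible circular order β, and let x ⋖ y ⋖ z be three points with d(x,y) ≤ min{d(x,z), d(y,z)}. Then the arc X^β_{xy} = {u : β(x,u,y)} ∪ {x,y} equals J(x,y) = {u ∈ X : d(x,y) > max{d(x,u), d(u,y)}} ∪ {x,y}. -/
lemma lem2 {X : Type*} (C : CircOrder X) {a b c d : X} (h1 : C.btw a b c) (h2 : C.btw a c d) :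
    C.btw b c d :=
  C.cyclic (C.cyclic (C.btw_trans (C.cyclic h2) (C.cyclic (C.cyclic h1))))

lemma chain3 {X : Type*} (C : CircOrder X) {x y z : X} (h : C.Chain ![x,y,z]) :
    C.btw x y z ∧ x ≠ y ∧ y ≠ z ∧ x ≠ z := by
  obtain ⟨⟨i,j,k,h1,h2,h3⟩, h4⟩ := h
  have key : x ≠ y ∧ y ≠ z ∧ x ≠ z := by
    clear h4
    fin_cases i <;> fin_cases j <;> fin_cases k <;> refine ⟨?_, ?_, ?_⟩ <;>
      simp_all <;> (intro h; subst h; simp_all)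
  exact ⟨h4 0 1 2 (by decide) (by decide) key.1 key.2.1 key.2.2, key⟩

lemma chain4 {X : Type*} (C : CircOrder X) {a b c d : X}
    (hab : a ≠ b) (hac : a ≠ c) (had : a ≠ d) (hbc : b ≠ c) (hbd : b ≠ d) (hcd : c ≠ d)
    (h1 : C.btw a b c) (h2 : C.btw a b d) (h3 : C.btw a c d) (h4 : C.btw b c d) :
    C.Chain ![a,b,c,d] := by
  refine ⟨⟨0,1,2, by simpa using hab, by simpa using hbc, by simpa using hac⟩, ?_⟩
  intro i j k hij hjk _ _ _
  fin_cases i <;> fin_cases j <;> fin_cases k <;> simp_all <;> omega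

theorem stmt16 {X : Type*} [Fintype X] (d : X → X → ℝ) (hd : Dissim d)
    (C : CircOrder X) (hc : sqcCompat C d) (x y z : X)
    (hch : C.Chain ![x, y, z]) (hle : d x y ≤ min (d x z) (d y z)) :
    C.arc x y = {u : X | max (d x u) (d u y) < d x y} ∪ {x, y} := by
  obtain ⟨hxyz, hxy, hyz, hxz⟩ := chain3 C hch
  have hs := hd.1
  have hle1 : d x y ≤ d x z := hle.trans (min_le_left _ _)
  have hle2 : d x y ≤ d y z := hle.trans (min_le_right _ _)
  have pw : ∀ {a b c e : X}, a ≠ b → a ≠ c → a ≠ e → b ≠ c → b ≠ e → c ≠ e →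
      List.Pairwise (· ≠ ·) [a, b, c, e] := by
    intro a b c e h1 h2 h3 h4 h5 h6
    simp [List.pairwise_cons, h1, h2, h3, h4, h5, h6]
  ext u
  simp only [CircOrder.arc, Set.mem_union, Set.mem_setOf_eq, Set.mem_insert_iff,
    Set.mem_singleton_iff]
  constructor
  · rintro (hu | hu | hu)
    · -- btw x u y
      obtain ⟨hxu, huy, _⟩ := C.distinct hu
      have huz : u ≠ z := by
        rintro rfl
        exact C.asymm hxyz (C.cyclic hu)
      have hxuz : C.btw x u z := C.btw_trans hu hxyz
      have huyz : C.btw u y z := lem2 C hu hxyz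
      left
      have hA := hc x u y z (pw hxu hxy hxz huy huz hyz)
        (chain4 C hxu hxy hxz huy huz hyz hu hxuz hxyz huyz)
      have hB := hc y z x u (pw hyz hxy.symm huy.symm hxz.symm huz.symm hxu)
        (chain4 C hyz hxy.symm huy.symm hxz.symm huz.symm hxu
          (C.cyclic hxyz) (C.cyclic huyz) (C.cyclic (C.cyclic hu))
          (C.cyclic (C.cyclic hxuz)))
      -- hA : min (d u y) (d z y) < d x y;  hB : min (d z x) (d u x) < d y x
      rw [max_lt_iff]
      constructor
      · rcases min_lt_iff.mp hB with h | h
        · rw [hs z x] at h; rw [hs y x] at h; linarith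
        · rw [hs u x, hs y x] at h; exact h
      · rcases min_lt_iff.mp hA with h | h
        · exact h
        · rw [hs z y] at h; linarith
    · right; left; exact hu
    · right; right; exact hu
  · rintro (hmax | rfl | rfl)
    · have hux : u ≠ x := by
        rintro rfl
        linarith [le_max_right (d u u) (d u y)]
      have huy : u ≠ y := by
        rintro rfl
        have h0 : d u u = 0 := (hd.2.2 u u).mpr rfl
        linarith [le_max_left (d x u) (d u u)]
      rcases C.total hux.symm huy hxy with h | h
      · left; exact h
      -- h : btw y u x
      · have huz : u ≠ z := by
          rintro rfl
          linarith [(max_lt_iff.mp hmax).1]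
        rcases C.total huy.symm huz hyz with h2 | h2
        · -- h2 : btw y u z, so cycle x,y,u,z
          exfalso
          have huzx : C.btw u z x := lem2 C h2 (C.cyclic hxyz)
          have hq := hc u z x y (pw huz hux huy hxz.symm hyz.symm hxy)
            (chain4 C huz hux huy hxz.symm hyz.symm hxy huzx (C.cyclic h2)
              (C.cyclic h) (C.cyclic (C.cyclic hxyz)))
          -- hq : min (d z x) (d y x) < d u x
          have h1m := (max_lt_iff.mp hmax).1
          rw [hs z x, hs y x, hs u x] at hq
          rcases min_lt_iff.mp hq with hq' | hq' <;> linarith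
        · -- h2 : btw z u y, so btw y z u, cycle x,y,z,u
          exfalso
          have hyzu : C.btw y z u := C.cyclic (C.cyclic h2)
          have hzux : C.btw z u x := lem2 C hyzu h
          have hq := hc u x y z (pw hux huy huz hxy hxz hyz)
            (chain4 C hux huy huz hxy hxz hyz (C.cyclic h) (C.cyclic hzux)
              (C.cyclic (C.cyclic hyzu)) hxyz)
          -- hq : min (d x y) (d z y) < d u y
          have h2m := (max_lt_iff.mp hmax).2
          rw [hs z y] at hq
          rcases min_lt_iff.mp hq with hq' | hq' <;> linarith
    · right; left; rfl
    · right; right; rfl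
end
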